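/- For vectors u₁, u₂ ∈ ℝ^m and v₁, v₂ ∈ ℝ^n, the nuclear norm (sum of singular values) of u₁v₁ᵀ + u₂v₂ᵀ equals √(‖u₁‖²‖v₁‖² + ‖u₂‖²‖v₂‖² + 2‖u₁‖‖v₁‖‖u₂‖‖v₂‖ cos(θ_u − θ_v)), where θ_u, θ_v ∈ [0,π] are the angles between u₁,u₂ and between v₁,v₂ respectively. -/

import Mathlib

open Matrix BigOperators

/-- Euclidean 2-norm of a vector in `ℝ^n`. -/
noncomputable def euclNorm {n : ℕ} (x : Fin n → ℝ) : ℝ := Real.sqrt (∑ i, x i ^ 2)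

/-- Frobenius norm of a real matrix. -/
noncomputable def frobNorm {m n : ℕ} (M : Matrix (Fin m) (Fin n) ℝ) : ℝ :=
  Real.sqrt (∑ i, ∑ j, M i j ^ 2)

/-- The singular values of a real `m × n` matrix: square roots of the eigenvalues of `Aᵀ A`
(for real matrices `Aᴴ = Aᵀ`). -/
noncomputable def singVal {m n : ℕ} (A : Matrix (Fin m) (Fin n) ℝ) (i : Fin n) : ℝ :=
  Real.sqrt ((show (Aᵀ * A).IsHermitian by
    simpa using Matrix.isHermitian_conjTranspose_mul_self A).eigenvalues i)

/-- Nuclear (trace) norm: the sum of the singular values with multiplicity. -/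
noncomputable def nuclearNorm {m n : ℕ} (A : Matrix (Fin m) (Fin n) ℝ) : ℝ :=
  ∑ i, singVal A i

/-- Spectral norm (operator 2-norm): sup of `‖A x‖₂` over Euclidean unit vectors `x`. -/
noncomputable def specNorm {m n : ℕ} (A : Matrix (Fin m) (Fin n) ℝ) : ℝ :=
  sSup {c | ∃ x : Fin n → ℝ, euclNorm x = 1 ∧ c = euclNorm (A.mulVec x)}

/-- Smallest singular value of a real `m × n` matrix. -/
noncomputable def sigmaMin {m n : ℕ} (A : Matrix (Fin m) (Fin n) ℝ) : ℝ :=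
  Real.sqrt (⨅ i : Fin n, (show (Aᵀ * A).IsHermitian by
    simpa using Matrix.isHermitian_conjTranspose_mul_self A).eigenvalues i)

/-! Write `A = Uᵀ V`, where `U` and `V` have rows `u₁, u₂` and `v₁, v₂`. Then `AᵀA` has rank at most
two, so `‖A‖_* = σ₁ + σ₂ = √(σ₁² + σ₂² + 2 √(σ₁²σ₂²))`, and the two symmetric functions of
`σ₁², σ₂²` are read off the traces of `AᵀA` and `(AᵀA)²`. These equal the traces of `M` and `M²`
for the `2 × 2` matrix `M = (U Uᵀ)(V Vᵀ)`, giving `σ₁² + σ₂² = tr M` and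
`σ₁²σ₂² = det (U Uᵀ) det (V Vᵀ) = (‖u₁‖‖u₂‖ sin θu ‖v₁‖‖v₂‖ sin θv)²`. Since the sines are
nonnegative on `[0, π]`, `tr M + 2 √(det M)` collapses to the claimed expression by
`cos θu cos θv + sin θu sin θv = cos (θu - θv)`. -/

open Real

namespace Matrix

theorem IsHermitian.trace_mul_self_eq_sum_sq_eigenvalues {𝕜 ι : Type*} [RCLike 𝕜] [Fintype ι]
    [DecidableEq ι] {A : Matrix ι ι 𝕜} (hA : A.IsHermitian) :
    (A * A).trace = ∑ i, ((hA.eigenvalues i ^ 2 : ℝ) : 𝕜) := by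
  conv_lhs => rw [hA.spectral_theorem, ← map_mul, Unitary.conjStarAlgAut_apply, trace_mul_cycle,
    Unitary.coe_star_mul_self, one_mul, diagonal_mul_diagonal, trace_diagonal]
  simp [sq]

theorem trace_mul_mul_self_comm {ι κ R : Type*} [Fintype ι] [Fintype κ] [CommSemiring R]
    (X : Matrix ι κ R) (Y : Matrix κ ι R) :
    (X * Y * (X * Y)).trace = (Y * X * (Y * X)).trace := by
  rw [Matrix.mul_assoc, trace_mul_comm]
  simp only [Matrix.mul_assoc]

theorem trace_sq_sub_trace_mul_self_fin_two {R : Type*} [CommRing R]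
    (M : Matrix (Fin 2) (Fin 2) R) : M.trace ^ 2 - (M * M).trace = 2 * M.det := by
  simp only [trace_fin_two, det_fin_two, mul_apply, Fin.sum_univ_two]
  ring

theorem of_mul_transpose_of_fin_two {ι R : Type*} [Fintype ι] [CommSemiring R] (x y : ι → R) :
    of ![x, y] * (of ![x, y])ᵀ = !![x ⬝ᵥ x, x ⬝ᵥ y; y ⬝ᵥ x, y ⬝ᵥ y] := by
  ext i j
  fin_cases i <;> fin_cases j <;> rfl

theorem vecMulVec_add_vecMulVec {ι κ R : Type*} [CommSemiring R] (u₁ u₂ : ι → R)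
    (v₁ v₂ : κ → R) :
    vecMulVec u₁ v₁ + vecMulVec u₂ v₂ = (of ![u₁, u₂])ᵀ * of ![v₁, v₂] := by
  ext i j
  simp [mul_apply, Fin.sum_univ_two, vecMulVec_apply]

end Matrix

theorem Finset.sum_sqrt_of_card_le_two {ι : Type*} (s : Finset ι) (hs : s.card ≤ 2) (e : ι → ℝ)
    (he : ∀ i, 0 ≤ e i) :
    ∑ i ∈ s, √(e i) = √(∑ i ∈ s, e i + 2 * √(((∑ i ∈ s, e i) ^ 2 - ∑ i ∈ s, e i ^ 2) / 2)) := by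
  classical
  interval_cases hc : s.card
  · simp [Finset.card_eq_zero.mp hc]
  · obtain ⟨a, rfl⟩ := Finset.card_eq_one.mp hc
    simp
  · obtain ⟨a, b, hab, rfl⟩ := Finset.card_eq_two.mp hc
    have hprod : ((e a + e b) ^ 2 - (e a ^ 2 + e b ^ 2)) / 2 = e a * e b := by ring
    rw [Finset.sum_pair hab, Finset.sum_pair hab, Finset.sum_pair hab, hprod, sqrt_mul (he a)]
    have hsq : e a + e b + 2 * (√(e a) * √(e b)) = (√(e a) + √(e b)) ^ 2 := by
      rw [add_sq, sq_sqrt (he a), sq_sqrt (he b)]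
      ring
    rw [hsq, sqrt_sq (by positivity)]

theorem Real.sum_sqrt_of_card_ne_zero_le_two {ι : Type*} [Fintype ι] (e : ι → ℝ)
    (he : ∀ i, 0 ≤ e i) (hcard : Fintype.card {i // e i ≠ 0} ≤ 2) :
    ∑ i, √(e i) = √(∑ i, e i + 2 * √(((∑ i, e i) ^ 2 - ∑ i, e i ^ 2) / 2)) := by
  classical
  have hsupp (f : ℝ → ℝ) (hf : f 0 = 0) :
      ∑ i, f (e i) = ∑ i ∈ Finset.univ.filter (e · ≠ 0), f (e i) :=
    (Finset.sum_subset (Finset.subset_univ _) fun i _ hi => by simp_all).symm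
  rw [hsupp _ sqrt_zero, hsupp (fun x => x) rfl, hsupp (· ^ 2) (zero_pow two_ne_zero)]
  exact Finset.sum_sqrt_of_card_le_two _ (by rwa [Fintype.card_subtype] at hcard) e he

theorem nuclearNorm_eq_of_rank_le_two {m n : ℕ} (A : Matrix (Fin m) (Fin n) ℝ) (hA : A.rank ≤ 2) :
    nuclearNorm A = √((Aᵀ * A).trace
      + 2 * √(((Aᵀ * A).trace ^ 2 - (Aᵀ * A * (Aᵀ * A)).trace) / 2)) := by
  have hpsd : (Aᵀ * A).PosSemidef := by
    simpa using posSemidef_conjTranspose_mul_self A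
  have hcard : Fintype.card {i // hpsd.isHermitian.eigenvalues i ≠ 0} ≤ 2 := by
    rwa [← hpsd.isHermitian.rank_eq_card_non_zero_eigs, rank_transpose_mul_self]
  rw [hpsd.isHermitian.trace_eq_sum_eigenvalues,
    hpsd.isHermitian.trace_mul_self_eq_sum_sq_eigenvalues]
  exact Real.sum_sqrt_of_card_ne_zero_le_two _ hpsd.eigenvalues_nonneg hcard

theorem nuclearNorm_transpose_mul_of_fin_two {m n : ℕ} (U : Matrix (Fin 2) (Fin m) ℝ)
    (V : Matrix (Fin 2) (Fin n) ℝ) :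
    nuclearNorm (Uᵀ * V) = √((U * Uᵀ * (V * Vᵀ)).trace + 2 * √((U * Uᵀ).det * (V * Vᵀ).det)) := by
  have hrank : (Uᵀ * V).rank ≤ 2 :=
    (rank_mul_le_right _ _).trans (rank_le_height V)
  have hgram : (Uᵀ * V)ᵀ * (Uᵀ * V) = Vᵀ * (U * Uᵀ * V) := by
    simp only [transpose_mul, transpose_transpose, Matrix.mul_assoc]
  have hcycle : U * Uᵀ * V * Vᵀ = U * Uᵀ * (V * Vᵀ) := Matrix.mul_assoc _ _ _
  rw [nuclearNorm_eq_of_rank_le_two _ hrank, hgram, trace_mul_comm, trace_mul_mul_self_comm,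
    hcycle, trace_sq_sub_trace_mul_self_fin_two, det_mul, mul_div_cancel_left₀ _ two_ne_zero]

theorem euclNorm_sq {n : ℕ} (x : Fin n → ℝ) : euclNorm x ^ 2 = x ⬝ᵥ x := by
  rw [euclNorm, sq_sqrt (Finset.sum_nonneg fun i _ => sq_nonneg (x i))]
  simp only [dotProduct, sq]

theorem det_gram_fin_two {n : ℕ} {x y : Fin n → ℝ} {θ : ℝ}
    (h : euclNorm x * euclNorm y * cos θ = x ⬝ᵥ y) :
    (of ![x, y] * (of ![x, y])ᵀ).det = (euclNorm x * euclNorm y * sin θ) ^ 2 := by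
  rw [of_mul_transpose_of_fin_two, det_fin_two_of, ← euclNorm_sq, ← euclNorm_sq,
    dotProduct_comm y, ← h, mul_pow, sin_sq]
  ring

/-- Nuclear norm of a rank-(at most)-2 matrix `u₁v₁ᵀ + u₂v₂ᵀ`:
`θu, θv ∈ [0, π]` are the angles between `u₁, u₂` and `v₁, v₂`. -/
theorem nuclearNorm_rank_two {m n : ℕ} (u₁ u₂ : Fin m → ℝ) (v₁ v₂ : Fin n → ℝ)
    (θu θv : ℝ) (hθu : θu ∈ Set.Icc 0 Real.pi) (hθv : θv ∈ Set.Icc 0 Real.pi)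
    (hcu : euclNorm u₁ * euclNorm u₂ * Real.cos θu = ∑ i, u₁ i * u₂ i)
    (hcv : euclNorm v₁ * euclNorm v₂ * Real.cos θv = ∑ j, v₁ j * v₂ j) :
    nuclearNorm (vecMulVec u₁ v₁ + vecMulVec u₂ v₂)
      = Real.sqrt (euclNorm u₁ ^ 2 * euclNorm v₁ ^ 2 + euclNorm u₂ ^ 2 * euclNorm v₂ ^ 2
          + 2 * (euclNorm u₁ * euclNorm v₁ * euclNorm u₂ * euclNorm v₂)
              * Real.cos (θu - θv)) := by
  change _ = u₁ ⬝ᵥ u₂ at hcu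
  change _ = v₁ ⬝ᵥ v₂ at hcv
  have hsin : 0 ≤ euclNorm u₁ * euclNorm u₂ * sin θu * (euclNorm v₁ * euclNorm v₂ * sin θv) := by
    have hsu := sin_nonneg_of_nonneg_of_le_pi hθu.1 hθu.2
    have hsv := sin_nonneg_of_nonneg_of_le_pi hθv.1 hθv.2
    unfold euclNorm
    positivity
  rw [vecMulVec_add_vecMulVec, nuclearNorm_transpose_mul_of_fin_two, det_gram_fin_two hcu,
    det_gram_fin_two hcv, ← mul_pow, sqrt_sq hsin, of_mul_transpose_of_fin_two,
    of_mul_transpose_of_fin_two, mul_fin_two, trace_fin_two_of, dotProduct_comm u₂,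
    dotProduct_comm v₂, ← hcu, ← hcv, ← euclNorm_sq, ← euclNorm_sq, ← euclNorm_sq,
    ← euclNorm_sq, cos_sub]
  congr 1
  ring
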